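/- Orthogonal tensors preserve the tensor Frobenius norm under the t-product: if Q is an orthogonal n1×n1×n3 tensor (Qᵀ' * Q = I) and A is any n1×n2×n3 tensor, then ‖Q * A‖_F = ‖A‖_F. -/

import Mathlib

open Finset Complex
open scoped ComplexOrder

/-- The root `ζ = exp(-2πi/n)` used in the mode-3 DFT. -/
noncomputable def dftRoot (n : ℕ) : ℂ := Complex.exp (-2 * Real.pi * Complex.I / n)

/-- Mode-3 DFT of a third-order tensor: `Â(i,j,ω) = ∑ k, A(i,j,k) ζ^{ωk}`. -/
noncomputable def dft3 {n1 n2 n3 : ℕ} [NeZero n3]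
    (A : Fin n1 → Fin n2 → ZMod n3 → ℂ) (i : Fin n1) (j : Fin n2) (w : ZMod n3) : ℂ :=
  ∑ k : ZMod n3, A i j k * dftRoot n3 ^ (w * k).val

/-- t-product of third-order complex tensors via circular convolution of tubes. -/
noncomputable def tProdC {n1 n2 n4 n3 : ℕ} [NeZero n3]
    (A : Fin n1 → Fin n2 → ZMod n3 → ℂ) (B : Fin n2 → Fin n4 → ZMod n3 → ℂ) :
    Fin n1 → Fin n4 → ZMod n3 → ℂ :=
  fun i j t => ∑ k : Fin n2, ∑ s : ZMod n3, A i k s * B k j (t - s)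

/-- Conjugate tensor transpose: `Aᵀ'(i,j,k) = conj (A(j,i,-k))`. -/
noncomputable def ctT {n1 n2 n3 : ℕ} (A : Fin n1 → Fin n2 → ZMod n3 → ℂ) :
    Fin n2 → Fin n1 → ZMod n3 → ℂ :=
  fun i j k => starRingEnd ℂ (A j i (-k))

/-- The identity tensor: `I(i,i,0) = 1` and zero elsewhere. -/
noncomputable def idTC (n n3 : ℕ) : Fin n → Fin n → ZMod n3 → ℂ :=
  fun i j k => if i = j ∧ k = 0 then 1 else 0

/-- A tensor `Q` is orthogonal if `Qᵀ' * Q = Q * Qᵀ' = I` in the t-product sense. -/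
noncomputable def IsOrthT {n n3 : ℕ} [NeZero n3] (Q : Fin n → Fin n → ZMod n3 → ℂ) : Prop :=
  tProdC (ctT Q) Q = idTC n n3 ∧ tProdC Q (ctT Q) = idTC n n3

/-- The `ω`-th frontal slice of the mode-3 DFT of a tensor. -/
noncomputable def sliceDFT {n1 n2 n3 : ℕ} [NeZero n3]
    (A : Fin n1 → Fin n2 → ZMod n3 → ℂ) (w : ZMod n3) : Matrix (Fin n1) (Fin n2) ℂ :=
  Matrix.of fun i j => dft3 A i j w

/-- Squared Frobenius norm of a third-order tensor. -/
noncomputable def frob2 {n1 n2 n3 : ℕ} [NeZero n3]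
    (A : Fin n1 → Fin n2 → ZMod n3 → ℂ) : ℝ :=
  ∑ i : Fin n1, ∑ j : Fin n2, ∑ k : ZMod n3, ‖A i j k‖ ^ 2

/-- Nuclear norm of a matrix: sum of singular values, i.e. `Re (trace √(Mᴴ M))`. -/
noncomputable def nuclearNorm {m n : Type*} [Fintype m] [Fintype n] [DecidableEq n]
    (M : Matrix m n ℂ) : ℝ :=
  ((Matrix.posSemidef_conjTranspose_mul_self M).1.eigenvectorUnitary.1 *
    Matrix.diagonal ((fun x : ℝ => ((Real.sqrt x : ℝ) : ℂ)) ∘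
      (Matrix.posSemidef_conjTranspose_mul_self M).1.eigenvalues) *
    (star (Matrix.posSemidef_conjTranspose_mul_self M).1.eigenvectorUnitary : Matrix n n ℂ)).trace.re

/-! The mode-3 DFT turns the t-product into slice-wise matrix multiplication and the conjugate
tensor transpose into slice-wise conjugate transposition. Hence `Qᵀ' * Q = I` says that every
Fourier slice of `Q` is an isometry, which preserves the Frobenius norm of the corresponding slice
of `A`; by Parseval along the tubes, these slice norms add up to `n3 ‖A‖_F²`. -/

open scoped ComplexConjugate Matrix ZMod

namespace ZMod

variable {N : ℕ} [NeZero N]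

theorem dft_conv (f g : ZMod N → ℂ) (k : ZMod N) :
    𝓕 (fun t ↦ ∑ s, f s * g (t - s)) k = 𝓕 f k * 𝓕 g k := by
  rw [dft_apply, dft_apply, dft_apply, Finset.sum_mul_sum]
  simp only [smul_eq_mul, Finset.mul_sum]
  rw [Finset.sum_comm]
  refine Finset.sum_congr rfl fun s _ ↦ ?_
  refine (Fintype.sum_equiv (Equiv.addRight s) _ _ fun t ↦ ?_).symm
  rw [Equiv.coe_addRight, add_sub_cancel_right, add_mul, neg_add, AddChar.map_add_eq_mul]
  ring

theorem dft_conj_comp_neg (f : ZMod N → ℂ) (k : ZMod N) :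
    𝓕 (fun j ↦ conj (f (-j))) k = conj (𝓕 f k) := by
  simp only [dft_apply, smul_eq_mul, map_sum, map_mul]
  refine Fintype.sum_equiv (Equiv.neg _) _ _ fun j ↦ ?_
  rw [Equiv.neg_apply, ← AddChar.map_neg_eq_conj, neg_mul, neg_neg]

/-- Parseval: apply the convolution theorem to the autocorrelation of `f` and invert at `0`. -/
theorem sum_norm_sq_dft (f : ZMod N → ℂ) :
    ∑ k, ‖𝓕 f k‖ ^ 2 = N * ∑ j, ‖f j‖ ^ 2 := by
  have h := congrFun (dft_dft fun t ↦ ∑ s, f s * conj (f (-(t - s)))) 0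
  simp only [dft_apply_zero, dft_conv f (fun j ↦ conj (f (-j))), dft_conj_comp_neg,
    Complex.mul_conj', neg_zero, zero_sub, neg_neg, smul_eq_mul] at h
  exact_mod_cast h

end ZMod

theorem dftRoot_pow_val {n : ℕ} [NeZero n] (a : ZMod n) :
    dftRoot n ^ a.val = ZMod.stdAddChar (-a) := by
  rw [AddChar.map_neg_eq_inv, ZMod.stdAddChar_apply, ZMod.toCircle_apply, dftRoot,
    ← Complex.exp_nat_mul, ← Complex.exp_neg]
  congr 1
  ring

namespace Matrix

variable {𝕜 : Type*} [RCLike 𝕜] {l m n : Type*} [Fintype l] [Fintype m] [Fintype n]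

theorem ofReal_sum_norm_sq_eq_trace (M : Matrix m n 𝕜) :
    ((∑ i, ∑ j, ‖M i j‖ ^ 2 : ℝ) : 𝕜) = (Mᴴ * M).trace := by
  rw [trace, Finset.sum_comm]
  push_cast
  simp only [diag_apply, mul_apply, conjTranspose_apply, RCLike.star_def, RCLike.conj_mul]

theorem sum_norm_sq_mul_of_conjTranspose_mul_self_eq_one [DecidableEq m] {U : Matrix l m 𝕜}
    (hU : Uᴴ * U = 1) (M : Matrix m n 𝕜) :
    ∑ i, ∑ j, ‖(U * M) i j‖ ^ 2 = ∑ i, ∑ j, ‖M i j‖ ^ 2 := by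
  have h := ofReal_sum_norm_sq_eq_trace (U * M)
  rw [conjTranspose_mul, Matrix.mul_assoc, ← Matrix.mul_assoc Uᴴ, hU, Matrix.one_mul,
    ← ofReal_sum_norm_sq_eq_trace] at h
  exact_mod_cast h

end Matrix

theorem sliceDFT_apply {n1 n2 n3 : ℕ} [NeZero n3] (A : Fin n1 → Fin n2 → ZMod n3 → ℂ)
    (w : ZMod n3) (i : Fin n1) (j : Fin n2) : sliceDFT A w i j = 𝓕 (A i j) w := by
  refine Finset.sum_congr rfl fun k _ ↦ ?_
  rw [dftRoot_pow_val, mul_comm w k, smul_eq_mul, mul_comm]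

section sliceDFT

variable {n1 n2 n4 n3 : ℕ} [NeZero n3]

theorem sliceDFT_tProdC (A : Fin n1 → Fin n2 → ZMod n3 → ℂ) (B : Fin n2 → Fin n4 → ZMod n3 → ℂ)
    (w : ZMod n3) : sliceDFT (tProdC A B) w = sliceDFT A w * sliceDFT B w := by
  ext i j
  have h : tProdC A B i j = ∑ k, fun t ↦ ∑ s, A i k s * B k j (t - s) := by
    ext t
    rw [Finset.sum_apply]
    rfl
  simp only [Matrix.mul_apply, sliceDFT_apply, h, map_sum, Finset.sum_apply, ZMod.dft_conv]

theorem sliceDFT_ctT (A : Fin n1 → Fin n2 → ZMod n3 → ℂ) (w : ZMod n3) :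
    sliceDFT (ctT A) w = (sliceDFT A w)ᴴ := by
  ext i j
  rw [Matrix.conjTranspose_apply, sliceDFT_apply, sliceDFT_apply]
  exact ZMod.dft_conj_comp_neg (A j i) w

theorem sliceDFT_idTC (n : ℕ) (w : ZMod n3) : sliceDFT (idTC n n3) w = 1 := by
  ext i j
  by_cases h : i = j <;> simp [sliceDFT_apply, idTC, ZMod.dft_apply, Matrix.one_apply, h]

theorem sum_norm_sq_sliceDFT (A : Fin n1 → Fin n2 → ZMod n3 → ℂ) :
    ∑ w, ∑ i, ∑ j, ‖sliceDFT A w i j‖ ^ 2 = n3 * frob2 A := by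
  simp only [sliceDFT_apply]
  rw [frob2, Finset.mul_sum, Finset.sum_comm]
  refine Finset.sum_congr rfl fun i _ ↦ ?_
  rw [Finset.mul_sum, Finset.sum_comm]
  exact Finset.sum_congr rfl fun j _ ↦ ZMod.sum_norm_sq_dft (A i j)

theorem conjTranspose_sliceDFT_mul_self {Q : Fin n1 → Fin n1 → ZMod n3 → ℂ}
    (hQ : tProdC (ctT Q) Q = idTC n1 n3) (w : ZMod n3) : (sliceDFT Q w)ᴴ * sliceDFT Q w = 1 := by
  rw [← sliceDFT_ctT, ← sliceDFT_tProdC, hQ, sliceDFT_idTC]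

end sliceDFT

/-- Orthogonal tensors preserve the Frobenius norm under the t-product:
if `Qᵀ' * Q = I` then `‖Q * A‖_F = ‖A‖_F`. -/
theorem frobNorm_tProdC_orth {n1 n2 n3 : ℕ} [NeZero n3]
    (Q : Fin n1 → Fin n1 → ZMod n3 → ℂ) (A : Fin n1 → Fin n2 → ZMod n3 → ℂ)
    (hQ : tProdC (ctT Q) Q = idTC n1 n3) :
    Real.sqrt (frob2 (tProdC Q A)) = Real.sqrt (frob2 A) := by
  have h : (n3 : ℝ) * frob2 (tProdC Q A) = n3 * frob2 A := by
    simp only [← sum_norm_sq_sliceDFT, sliceDFT_tProdC,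
      Matrix.sum_norm_sq_mul_of_conjTranspose_mul_self_eq_one (conjTranspose_sliceDFT_mul_self hQ _)]
  rw [mul_left_cancel₀ (Nat.cast_ne_zero.2 (NeZero.ne n3)) h]
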